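/- arXiv:0811.1395 — 3 statements merged into one kernel-verified Lean document; each statement's English description precedes it below -/
import Mathlib

section
/- Let I be a closed two-sided ideal of a unital C*-algebra A such that both I and A/I have stable rank one. Then A has stable rank one if and only if every unitary in A/I lifts to a unitary in A. -/
/-!
Both directions go through lifting invertibles along `q`. If invertibles are dense in `A`, then
`q(GL(A))` is open (Banach open mapping) and dense, so it meets `b · q(GL(A))` for every invertible
`b`, and `b` lifts to an invertible; the unitary part of the polar decomposition of a lift of a
unitary `u` lifts `u`. Conversely, an invertible `b = u |b|` lifts to `v · exp k`, where `v` is a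
unitary lift of `u` and `q k = log |b|`. Then for an open `U ⊆ A`, the open set `q(U)` contains
an invertible `q n`; with `c` an invertible lift of `q n` we get `n = c (1 + x)` for some `x ∈ I`,
and approximating `1 + x` by invertibles of the unitization of `I` produces invertibles in `U`.
-/

open scoped CStarAlgebra

theorem exists_isUnit_map_eq_of_dense_isUnit {A B F : Type*} [NormedRing A] [CompleteSpace A]
    [Ring B] [TopologicalSpace B] [ContinuousMul B] [FunLike F A B] [RingHomClass F A B]
    (q : F) (hq : Continuous q) (hq_open : IsOpenMap q) (hq_surj : Function.Surjective q)
    (hA : Dense {x : A | IsUnit x}) {b : B} (hb : IsUnit b) : ∃ a, IsUnit a ∧ q a = b := by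
  obtain ⟨b, rfl⟩ := hb
  have hopen : IsOpen ((((b⁻¹ : Bˣ) : B) * ·) ⁻¹' (q '' {x | IsUnit x})) :=
    (hq_open _ Units.isOpen).preimage (continuous_const_mul _)
  obtain ⟨_, ⟨c, hc, rfl⟩, d, hd, hdc⟩ :=
    (hq_surj.denseRange.dense_image hq hA).exists_mem_open hopen ⟨b, 1, isUnit_one, by simp⟩
  refine ⟨c * ↑hd.unit⁻¹, hc.mul hd.unit⁻¹.isUnit, ?_⟩
  have hcd : q c = b * q d := by rw [hdc, ← mul_assoc, Units.mul_inv, one_mul]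
  rw [map_mul, hcd, mul_assoc, ← map_mul, hd.mul_val_inv, map_one, mul_one]

theorem dense_isUnit_of_forall_isUnit_lift {R A B G F : Type*} [Ring R] [TopologicalSpace R]
    [Ring A] [TopologicalSpace A] [ContinuousMul A] [Ring B] [TopologicalSpace B]
    [FunLike G R A] [RingHomClass G R A] [FunLike F A B] [RingHomClass F A B]
    (ψ : G) (hψ : Continuous ψ) (q : F) (hq_open : IsOpenMap q)
    (hker : ∀ k, q k = 0 → 1 + k ∈ Set.range ψ)
    (hR : Dense {x : R | IsUnit x}) (hB : Dense {x : B | IsUnit x})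
    (hlift : ∀ b, IsUnit b → ∃ a, IsUnit a ∧ q a = b) : Dense {x : A | IsUnit x} := by
  rw [dense_iff_inter_open]
  rintro U hU ⟨a, ha⟩
  obtain ⟨_, hb, n, hnU, rfl⟩ := hB.exists_mem_open (hq_open U hU) ⟨q a, a, ha, rfl⟩
  obtain ⟨c, hc, hcn⟩ := hlift _ hb
  obtain ⟨r, hr⟩ :=
    hker (↑hc.unit⁻¹ * (n - c)) (by rw [map_mul, map_sub, hcn, sub_self, mul_zero])
  have hn : c * ψ r = n := by
    rw [hr, mul_add, mul_one, ← mul_assoc, hc.mul_val_inv, one_mul, add_sub_cancel]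
  obtain ⟨w, hw, hwU⟩ :=
    hR.exists_mem_open (hU.preimage ((continuous_const_mul c).comp hψ)) ⟨r, by simpa [hn]⟩
  exact ⟨c * ψ w, hwU, hc.mul (hw.map ψ)⟩

section CStarAlgebra

variable {A B F : Type*}

lemma IsUnit.isUnit_cfcAbs [CStarAlgebra A] [PartialOrder A] [StarOrderedRing A] {a : A}
    (ha : IsUnit a) : IsUnit (CFC.abs a) :=
  (CFC.isUnit_sqrt_iff _).2 (ha.star.mul ha)

lemma IsUnit.exists_mem_unitary_eq_mul_cfcAbs [CStarAlgebra A] [PartialOrder A]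
    [StarOrderedRing A] {a : A} (ha : IsUnit a) : ∃ u ∈ unitary A, a = u * CFC.abs a := by
  have habs := ha.isUnit_cfcAbs
  have hsa : IsSelfAdjoint (CFC.abs a) := .of_nonneg (CFC.abs_nonneg a)
  refine ⟨a * Ring.inverse (CFC.abs a), ?_,
    by rw [mul_assoc, Ring.inverse_mul_cancel _ habs, mul_one]⟩
  refine (ha.mul habs.ringInverse).mem_unitary_of_star_mul_self ?_
  rw [star_mul, hsa.ringInverse.star_eq, mul_assoc, ← mul_assoc (star a), ← CFC.abs_mul_abs,
    ← mul_assoc, ← mul_assoc, Ring.inverse_mul_cancel _ habs, one_mul,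
    Ring.mul_inverse_cancel _ habs]

lemma map_cfcAbs [NonUnitalCStarAlgebra A] [PartialOrder A] [StarOrderedRing A]
    [NonUnitalCStarAlgebra B] [PartialOrder B] [StarOrderedRing B]
    [FunLike F A B] [NonUnitalAlgHomClass F ℂ A B] [StarHomClass F A B] (φ : F) (a : A) :
    φ (CFC.abs a) = CFC.abs (φ a) :=
  (CFC.sqrt_unique (by rw [← map_mul, CFC.abs_mul_abs, map_mul, map_star])
    (map_nonneg φ (CFC.abs_nonneg a))).symm

variable [CStarAlgebra A] [CStarAlgebra B] [PartialOrder B] [StarOrderedRing B]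
  [FunLike F A B] [AlgHomClass F ℂ A B] [StarHomClass F A B]

lemma exists_mem_unitary_map_eq_of_isUnit [PartialOrder A] [StarOrderedRing A] (q : F)
    {u : B} (hu : u ∈ unitary B) {a : A} (ha : IsUnit a) (hau : q a = u) :
    ∃ v ∈ unitary A, q v = u := by
  obtain ⟨v, hv, hav⟩ := ha.exists_mem_unitary_eq_mul_cfcAbs
  refine ⟨v, hv, ?_⟩
  have := congrArg q hav
  rwa [map_mul, map_cfcAbs, hau, CFC.abs_of_mem_unitary hu, mul_one, eq_comm] at this

lemma exists_isUnit_map_eq_of_forall_unitary_lift (q : F) (hq_surj : Function.Surjective q)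
    (hlift : ∀ u ∈ unitary B, ∃ v ∈ unitary A, q v = u) {b : B} (hb : IsUnit b) :
    ∃ a, IsUnit a ∧ q a = b := by
  obtain ⟨u, hu, hbu⟩ := hb.exists_mem_unitary_eq_mul_cfcAbs
  obtain ⟨v, hv, rfl⟩ := hlift u hu
  obtain ⟨k, hk⟩ := hq_surj (CFC.log (CFC.abs b))
  have habs : IsStrictlyPositive (CFC.abs b) :=
    hb.isUnit_cfcAbs.isStrictlyPositive (CFC.abs_nonneg b)
  let _ : NormedAlgebra ℚ A := .restrictScalars ℚ ℂ A
  let _ : Algebra ℚ B := .restrictScalars ℚ ℂ B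
  refine ⟨v * NormedSpace.exp k,
    (Unitary.isUnit_coe (U := ⟨v, hv⟩)).mul (NormedSpace.isUnit_exp k), ?_⟩
  rw [map_mul, NormedSpace.map_exp q (map_continuous q), hk, CFC.exp_log (CFC.abs b), ← hbu]

end CStarAlgebra

theorem stmt1_general {I A B : Type*} [NonUnitalCStarAlgebra I] [CStarAlgebra A] [CStarAlgebra B]
    (ι : I →⋆ₙₐ[ℂ] A)
    (q : A →⋆ₐ[ℂ] B) (hqsurj : Function.Surjective q)
    (hker : ∀ a : A, q a = 0 ↔ a ∈ Set.range ι)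
    (hI : Dense {x : Unitization ℂ I | IsUnit x})
    (hB : Dense {x : B | IsUnit x}) :
    Dense {x : A | IsUnit x} ↔
      ∀ u ∈ unitary B, ∃ v ∈ unitary A, q v = u := by
  let _ := CStarAlgebra.spectralOrder A
  have _ := CStarAlgebra.spectralOrderedRing A
  let _ := CStarAlgebra.spectralOrder B
  have _ := CStarAlgebra.spectralOrderedRing B
  have hq_open : IsOpenMap q :=
    (⟨(q : A →ₗ[ℂ] B), map_continuous q⟩ : A →L[ℂ] B).isOpenMap hqsurj
  constructor
  · intro hA u hu
    obtain ⟨a, ha, hau⟩ := exists_isUnit_map_eq_of_dense_isUnit q (map_continuous q) hq_open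
      hqsurj hA (Unitary.isUnit_coe (U := ⟨u, hu⟩))
    exact exists_mem_unitary_map_eq_of_isUnit q hu ha hau
  · intro hlift
    refine dense_isUnit_of_forall_isUnit_lift (Unitization.starLift ι) (map_continuous _) q
      hq_open (fun k hk ↦ ?_) hI hB
      (fun b hb ↦ exists_isUnit_map_eq_of_forall_unitary_lift q hqsurj hlift hb)
    obtain ⟨x, rfl⟩ := (hker k).1 hk
    exact ⟨1 + x, by
      rw [map_add, map_one, ← Unitization.starLift_symm_apply_apply, Equiv.symm_apply_apply]⟩

/-- Let `I` be a closed two-sided ideal of a unital C*-algebra `A`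
(realized by the isometric embedding `ι : I → A`), and let `q : A → B` realize the quotient
`B = A/I`.  If both `I` and `B = A/I` have stable rank one (invertibles are dense, in the
minimal unitization in the non-unital case), then `A` has stable rank one if and only if
every unitary in `A/I` lifts to a unitary in `A`. -/
theorem stmt1 {I A B : Type*} [NonUnitalCStarAlgebra I] [CStarAlgebra A] [CStarAlgebra B]
    (ι : I →⋆ₙₐ[ℂ] A) (hιisom : Isometry ι)
    (hideal : ∀ (a : A) (x : I), a * ι x ∈ Set.range ι ∧ ι x * a ∈ Set.range ι)
    (q : A →⋆ₐ[ℂ] B) (hqsurj : Function.Surjective q)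
    (hker : ∀ a : A, q a = 0 ↔ a ∈ Set.range ι)
    (hI : Dense {x : Unitization ℂ I | IsUnit x})
    (hB : Dense {x : B | IsUnit x}) :
    Dense {x : A | IsUnit x} ↔
      ∀ u ∈ unitary B, ∃ v ∈ unitary A, q v = u :=
  stmt1_general ι q hqsurj hker hI hB
end

section
/- Let H be an infinite-dimensional Hilbert space, A the C*-algebra of 2×2 operator matrices over B(H) with compact off-diagonal entries, and π : A → A/M₂(K(H)) the quotient map. If S and T are isometries on H, then π(diag(S, T*)) is an extremal partial isometry in A/M₂(K(H)), i.e., an extreme point of the closed unit ball of the quotient. -/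
/-!
A partial isometry `u` of a unital C⋆-algebra with `(1 - u u⋆) y (1 - u⋆ u) = 0` for all `y` is
an extreme point of the unit ball. Indeed, if `u = a x₁ + b x₂` is a proper convex combination of
contractions, then `u⋆ u + a b (x₁ - x₂)⋆ (x₁ - x₂) = a x₁⋆ x₁ + b x₂⋆ x₂ ≤ 1`, and compressing
by the projection `u⋆ u` forces `(x₁ - x₂) u⋆ u = 0`; applied to the adjoints this also gives
`u u⋆ (x₁ - x₂) = 0`, so `x₁ - x₂ = (1 - u u⋆) (x₁ - x₂) (1 - u⋆ u) = 0`.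

For `D = diag(S, T⋆)` with isometries `S`, `T` we have `1 - D D⋆ = diag(1 - S S⋆, 0)` and
`1 - D⋆ D = diag(0, 1 - T T⋆)`, so a corner `(1 - D D⋆) W (1 - D⋆ D)` has the single entry
`(1 - S S⋆) W₁₂ (1 - T T⋆)`, which is compact for `W` in the algebra; hence the image of `D` in
the quotient satisfies the corner condition.
-/

noncomputable section

open ContinuousLinearMap

/-- The Hilbert space direct sum `H ⊕ H`. -/
abbrev HilbertSum (H : Type*) [NormedAddCommGroup H] [InnerProductSpace ℂ H] :=
  WithLp 2 (H × H)

variable (H : Type*) [NormedAddCommGroup H] [InnerProductSpace ℂ H] [CompleteSpace H]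

/-- The canonical continuous linear identification of `H ⊕ H` with `H × H`. -/
def hSumEquiv : HilbertSum H ≃L[ℂ] H × H := WithLp.prodContinuousLinearEquiv 2 ℂ H H

/-- The `(1,1)` entry of a bounded operator on `H ⊕ H`, viewed as a 2×2 operator matrix. -/
def entry11 (T : HilbertSum H →L[ℂ] HilbertSum H) : H →L[ℂ] H :=
  fst ℂ H H ∘L (hSumEquiv H).toContinuousLinearMap ∘L T ∘L
    (hSumEquiv H).symm.toContinuousLinearMap ∘L inl ℂ H H

/-- The `(1,2)` entry of a bounded operator on `H ⊕ H`, viewed as a 2×2 operator matrix. -/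
def entry12 (T : HilbertSum H →L[ℂ] HilbertSum H) : H →L[ℂ] H :=
  fst ℂ H H ∘L (hSumEquiv H).toContinuousLinearMap ∘L T ∘L
    (hSumEquiv H).symm.toContinuousLinearMap ∘L inr ℂ H H

/-- The `(2,1)` entry of a bounded operator on `H ⊕ H`, viewed as a 2×2 operator matrix. -/
def entry21 (T : HilbertSum H →L[ℂ] HilbertSum H) : H →L[ℂ] H :=
  snd ℂ H H ∘L (hSumEquiv H).toContinuousLinearMap ∘L T ∘L
    (hSumEquiv H).symm.toContinuousLinearMap ∘L inl ℂ H H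

/-- The `(2,2)` entry of a bounded operator on `H ⊕ H`, viewed as a 2×2 operator matrix. -/
def entry22 (T : HilbertSum H →L[ℂ] HilbertSum H) : H →L[ℂ] H :=
  snd ℂ H H ∘L (hSumEquiv H).toContinuousLinearMap ∘L T ∘L
    (hSumEquiv H).symm.toContinuousLinearMap ∘L inr ℂ H H

/-- The 2×2 diagonal operator matrix `diag(S, T') : H ⊕ H → H ⊕ H`. -/
def diagOp (S T' : H →L[ℂ] H) : HilbertSum H →L[ℂ] HilbertSum H :=
  (hSumEquiv H).symm.toContinuousLinearMap ∘L S.prodMap T' ∘L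
    (hSumEquiv H).toContinuousLinearMap

section PartialIsometry

variable {A : Type*} [CStarAlgebra A]

lemma isStarProjection_star_mul_self_of_mul_star_mul_self {u : A} (hu : u * star u * u = u) :
    IsStarProjection (star u * u) where
  isIdempotentElem := by
    rw [IsIdempotentElem, mul_assoc, ← mul_assoc u, hu]
  isSelfAdjoint := .star_mul_self u

lemma norm_le_one_of_mul_star_mul_self {u : A} (hu : u * star u * u = u) : ‖u‖ ≤ 1 := by
  have h := (isStarProjection_star_mul_self_of_mul_star_mul_self hu).norm_le
  rw [CStarRing.norm_star_mul_self] at h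
  nlinarith [norm_nonneg u]

lemma star_mul_self_le_one [PartialOrder A] [StarOrderedRing A] {z : A} (hz : ‖z‖ ≤ 1) :
    star z * z ≤ 1 :=
  calc star z * z ≤ algebraMap ℝ A (‖z‖ ^ 2) := CStarAlgebra.star_mul_le_algebraMap_norm_sq
    _ ≤ algebraMap ℝ A 1 := algebraMap_mono A (pow_le_one₀ (norm_nonneg z) hz)
    _ = 1 := map_one _

lemma star_convexCombination_mul_self_add (z₁ z₂ : A) {a b : ℝ} (hab : a + b = 1) :
    star (a • z₁ + b • z₂) * (a • z₁ + b • z₂) + (a * b) • (star (z₁ - z₂) * (z₁ - z₂))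
      = a • (star z₁ * z₁) + b • (star z₂ * z₂) := by
  obtain rfl : b = 1 - a := by linarith
  simp only [star_add, star_smul, star_sub, star_trivial, add_mul, mul_add, sub_mul, mul_sub,
    smul_mul_assoc, mul_smul_comm, smul_sub, smul_add, smul_smul]
  module

lemma IsStarProjection.mul_eq_zero_of_add_star_mul_self_le_one [PartialOrder A]
    [StarOrderedRing A] {p c : A} (hp : IsStarProjection p) (h : p + star c * c ≤ 1) :
    c * p = 0 := by
  have hconj : p + star (c * p) * (c * p) ≤ p := by
    have e : p * (p + star c * c) * p = p + star (c * p) * (c * p) := by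
      rw [star_mul, hp.isSelfAdjoint.star_eq, mul_add, add_mul, hp.isIdempotentElem.eq,
        hp.isIdempotentElem.eq]
      noncomm_ring
    simpa [e, hp.isIdempotentElem.eq] using hp.isSelfAdjoint.conjugate_le_conjugate h
  rw [← CStarRing.star_mul_self_eq_zero_iff]
  exact le_antisymm (by simpa using hconj) (star_mul_self_nonneg _)

lemma sub_mul_star_mul_self_eq_zero_of_mem_openSegment {z₁ z₂ w : A} (h₁ : ‖z₁‖ ≤ 1)
    (h₂ : ‖z₂‖ ≤ 1) (hw : w ∈ openSegment ℝ z₁ z₂) (hw' : w * star w * w = w) :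
    (z₁ - z₂) * (star w * w) = 0 := by
  let := CStarAlgebra.spectralOrder A
  have := CStarAlgebra.spectralOrderedRing A
  obtain ⟨a, b, ha, hb, hab, rfl⟩ := hw
  set c := √(a * b) • (z₁ - z₂)
  have hc : star c * c = (a * b) • (star (z₁ - z₂) * (z₁ - z₂)) := by
    rw [star_smul, star_trivial, smul_mul_smul_comm, Real.mul_self_sqrt (by positivity)]
  have hle : star (a • z₁ + b • z₂) * (a • z₁ + b • z₂) + star c * c ≤ 1 :=
    calc _ = a • (star z₁ * z₁) + b • (star z₂ * z₂) := by
          rw [hc, star_convexCombination_mul_self_add z₁ z₂ hab]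
      _ ≤ a • 1 + b • 1 := by
          gcongr
          exacts [star_mul_self_le_one h₁, star_mul_self_le_one h₂]
      _ = 1 := by rw [← add_smul, hab, one_smul]
  have hp := isStarProjection_star_mul_self_of_mul_star_mul_self hw'
  have hcp := hp.mul_eq_zero_of_add_star_mul_self_le_one hle
  rw [smul_mul_assoc, smul_eq_zero] at hcp
  exact hcp.resolve_left (by positivity)

lemma star_mem_openSegment_star {x x₁ x₂ : A} (hx : x ∈ openSegment ℝ x₁ x₂) :
    star x ∈ openSegment ℝ (star x₁) (star x₂) := by
  obtain ⟨a, b, ha, hb, hab, rfl⟩ := hx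
  exact ⟨a, b, ha, hb, hab, by simp only [star_add, star_smul, star_trivial]⟩

theorem mem_extremePoints_closedBall_of_mul_star_mul_self {u : A} (hu : u * star u * u = u)
    (hcorner : ∀ y : A, (1 - u * star u) * y * (1 - star u * u) = 0) :
    u ∈ Set.extremePoints ℝ (Metric.closedBall 0 1) := by
  simp only [mem_extremePoints_iff_left, Metric.mem_closedBall, dist_zero_right]
  refine ⟨norm_le_one_of_mul_star_mul_self hu, fun x₁ h₁ x₂ h₂ hx => ?_⟩
  have hu' : star u * star (star u) * star u = star u := by
    simpa [mul_assoc] using congrArg star hu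
  have hright : (x₁ - x₂) * (star u * u) = 0 :=
    sub_mul_star_mul_self_eq_zero_of_mem_openSegment h₁ h₂ hx hu
  have hleft : u * star u * (x₁ - x₂) = 0 := by
    have := sub_mul_star_mul_self_eq_zero_of_mem_openSegment (by simpa using h₁)
      (by simpa using h₂) (star_mem_openSegment_star hx) hu'
    simpa [star_mul, mul_assoc] using congrArg star this
  have hx₁₂ : x₁ = x₂ := by
    rw [← sub_eq_zero, ← hcorner (x₁ - x₂), sub_mul, one_mul, hleft, sub_zero, mul_sub, mul_one,
      hright, sub_zero]
  rw [hx₁₂, openSegment_same] at hx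
  exact hx₁₂.trans hx.symm

end PartialIsometry

section DiagonalOperatorMatrix

variable {E : Type*} [NormedAddCommGroup E] [InnerProductSpace ℂ E]

lemma diagOp_mul (A B C D : E →L[ℂ] E) :
    diagOp E A B * diagOp E C D = diagOp E (A * C) (B * D) := by
  ext x
  simp [diagOp, Prod.map]

lemma diagOp_one : diagOp E 1 1 = 1 := by
  ext x
  simp [diagOp, Prod.map]

lemma diagOp_sub (A B C D : E →L[ℂ] E) :
    diagOp E A B - diagOp E C D = diagOp E (A - C) (B - D) := by
  ext x
  simp only [diagOp, coe_comp, ContinuousLinearEquiv.coe_coe, Function.comp_apply, sub_apply,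
    ← map_sub, coe_prodMap', Prod.map, Prod.mk_sub_mk]

lemma one_sub_diagOp_mul_diagOp (A B C D : E →L[ℂ] E) :
    1 - diagOp E A B * diagOp E C D = diagOp E (1 - A * C) (1 - B * D) := by
  rw [diagOp_mul, ← diagOp_one, diagOp_sub]

lemma star_diagOp [CompleteSpace E] (A B : E →L[ℂ] E) :
    star (diagOp E A B) = diagOp E (star A) (star B) := by
  rw [star_eq_adjoint, star_eq_adjoint, star_eq_adjoint, eq_comm, eq_adjoint_iff]
  intro x y
  simp [diagOp, WithLp.prod_inner_apply, hSumEquiv, adjoint_inner_left]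

lemma entry11_diagOp_mul_mul_diagOp (A B C D : E →L[ℂ] E)
    (W : HilbertSum E →L[ℂ] HilbertSum E) :
    entry11 E (diagOp E A B * W * diagOp E C D) = A ∘L entry11 E W ∘L C := by
  ext x
  simp [entry11, diagOp, Prod.map]

lemma entry12_diagOp_mul_mul_diagOp (A B C D : E →L[ℂ] E)
    (W : HilbertSum E →L[ℂ] HilbertSum E) :
    entry12 E (diagOp E A B * W * diagOp E C D) = A ∘L entry12 E W ∘L D := by
  ext x
  simp [entry12, diagOp, Prod.map]

lemma entry21_diagOp_mul_mul_diagOp (A B C D : E →L[ℂ] E)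
    (W : HilbertSum E →L[ℂ] HilbertSum E) :
    entry21 E (diagOp E A B * W * diagOp E C D) = B ∘L entry21 E W ∘L C := by
  ext x
  simp [entry21, diagOp, Prod.map]

lemma entry22_diagOp_mul_mul_diagOp (A B C D : E →L[ℂ] E)
    (W : HilbertSum E →L[ℂ] HilbertSum E) :
    entry22 E (diagOp E A B * W * diagOp E C D) = B ∘L entry22 E W ∘L D := by
  ext x
  simp [entry22, diagOp, Prod.map]

/-- Membership in `M₂(K(E))`. -/
def IsCompactOperatorMatrix (X : HilbertSum E →L[ℂ] HilbertSum E) : Prop :=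
  IsCompactOperator (entry11 E X) ∧ IsCompactOperator (entry12 E X) ∧
    IsCompactOperator (entry21 E X) ∧ IsCompactOperator (entry22 E X)

lemma isCompactOperatorMatrix_diagOp_mul_mul_diagOp (P Q : E →L[ℂ] E)
    {W : HilbertSum E →L[ℂ] HilbertSum E} (hW : IsCompactOperator (entry12 E W)) :
    IsCompactOperatorMatrix (diagOp E P 0 * W * diagOp E 0 Q) := by
  simp only [IsCompactOperatorMatrix, entry11_diagOp_mul_mul_diagOp,
    entry12_diagOp_mul_mul_diagOp, entry21_diagOp_mul_mul_diagOp, entry22_diagOp_mul_mul_diagOp,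
    comp_zero, zero_comp, coe_comp]
  exact ⟨isCompactOperator_zero, (hW.comp_clm Q).clm_comp P, isCompactOperator_zero,
    isCompactOperator_zero⟩

end DiagonalOperatorMatrix

theorem stmt11
    (𝒜 : StarSubalgebra ℂ (HilbertSum H →L[ℂ] HilbertSum H))
    (h𝒜 : ∀ T, T ∈ 𝒜 ↔
      (IsCompactOperator ⇑(entry12 H T) ∧ IsCompactOperator ⇑(entry21 H T)))
    (B : Type*) [CStarAlgebra B]
    (q : 𝒜 →⋆ₐ[ℂ] B) (hqsurj : Function.Surjective q)
    (hqker : ∀ T : 𝒜, q T = 0 ↔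
      (IsCompactOperator ⇑(entry11 H (T : HilbertSum H →L[ℂ] HilbertSum H)) ∧
       IsCompactOperator ⇑(entry12 H (T : HilbertSum H →L[ℂ] HilbertSum H)) ∧
       IsCompactOperator ⇑(entry21 H (T : HilbertSum H →L[ℂ] HilbertSum H)) ∧
       IsCompactOperator ⇑(entry22 H (T : HilbertSum H →L[ℂ] HilbertSum H))))
    (S T : H →L[ℂ] H) (hS : star S * S = 1) (hT : star T * T = 1)
    (D : 𝒜) (hD : (D : HilbertSum H →L[ℂ] HilbertSum H) = diagOp H S (star T)) :
    q D ∈ Set.extremePoints ℝ (Metric.closedBall (0 : B) 1) := by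
  have hDstar : ((star D : 𝒜) : HilbertSum H →L[ℂ] HilbertSum H) = diagOp H (star S) T := by
    rw [StarMemClass.coe_star, hD, star_diagOp, star_star]
  have hD_partialIsometry : D * star D * D = D := Subtype.ext <| by
    rw [MulMemClass.coe_mul, MulMemClass.coe_mul, hDstar, hD, diagOp_mul, diagOp_mul,
      mul_assoc S, hS, mul_one, hT, one_mul]
  refine mem_extremePoints_closedBall_of_mul_star_mul_self
    (by simpa [map_star] using congrArg q hD_partialIsometry) fun y => ?_
  obtain ⟨W, rfl⟩ := hqsurj y
  have hcorner :
      (((1 - D * star D) * W * (1 - star D * D) : 𝒜) : HilbertSum H →L[ℂ] HilbertSum H) =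
        diagOp H (1 - S * star S) 0 * W * diagOp H 0 (1 - T * star T) := by
    simp only [MulMemClass.coe_mul, AddSubgroupClass.coe_sub, OneMemClass.coe_one, hD, hDstar,
      one_sub_diagOp_mul_diagOp, hS, hT, sub_self]
  have hcompact : IsCompactOperatorMatrix (((1 - D * star D) * W * (1 - star D * D) : 𝒜) :
      HilbertSum H →L[ℂ] HilbertSum H) :=
    hcorner ▸ isCompactOperatorMatrix_diagOp_mul_mul_diagOp _ _ ((h𝒜 W).1 W.2).1
  simpa [map_star] using (hqker _).2 hcompact
end
end

section
/- Let I be a closed two-sided ideal of a unital C*-algebra A and suppose I has an approximate identity consisting of projections. Then every unitary in A/I lifts to a partial isometry in A. -/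
/-!
Lift the unitary `u` to some `a`, so that `c = a⋆a - 1` lies in `I`. Since the projections `p` of
`I` form an approximate identity, the corner `(1 - p) c (1 - p)` has norm `< 1` for a suitable `p`,
so `s = 1 + (1 - p) c (1 - p) = (1 - p) a⋆a (1 - p) + p` is invertible and positive. Then
`v = a (1 - p) s^{-1/2}` satisfies `v⋆v = s^{-1/2} (s - p) s^{-1/2} = 1 - p`, a projection, so `v`
is a partial isometry; and `v` still lifts `u` because `p` and `s - 1` vanish in the quotient.
-/

open scoped CStarAlgebra

section InvSqrt

variable {A : Type*} [CStarAlgebra A]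

noncomputable def invSqrt (s : A) : A := cfc (fun t : ℝ => (√t)⁻¹) s

lemma isSelfAdjoint_invSqrt (s : A) : IsSelfAdjoint (invSqrt s) := cfc_predicate _ s

lemma continuousOn_inv_sqrt {S : Set ℝ} (hS : ∀ t ∈ S, 0 < t) :
    ContinuousOn (fun t : ℝ => (√t)⁻¹) S :=
  Real.continuous_sqrt.continuousOn.inv₀ fun t ht => (Real.sqrt_pos.mpr (hS t ht)).ne'

lemma invSqrt_mul_invSqrt_mul_self {s : A} (hs : IsSelfAdjoint s)
    (hpos : ∀ t ∈ spectrum ℝ s, 0 < t) : invSqrt s * invSqrt s * s = 1 := by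
  have hcont := continuousOn_inv_sqrt hpos
  calc invSqrt s * invSqrt s * s
      = cfc (fun t : ℝ => (√t)⁻¹) s * cfc (fun t : ℝ => (√t)⁻¹) s * cfc (fun t : ℝ => t) s := by
        rw [cfc_id' ℝ s, invSqrt]
    _ = cfc (fun t : ℝ => (√t)⁻¹ * (√t)⁻¹ * t) s := by
        rw [cfc_mul (fun t : ℝ => (√t)⁻¹ * (√t)⁻¹) (fun t : ℝ => t) s (hcont.mul hcont),
          cfc_mul _ _ s hcont hcont]
    _ = cfc (fun _ : ℝ => (1 : ℝ)) s := by
        refine cfc_congr fun t ht => ?_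
        have ht₀ := hpos t ht
        rw [← mul_inv, Real.mul_self_sqrt ht₀.le, inv_mul_cancel₀ ht₀.ne']
    _ = 1 := by rw [cfc_const (1 : ℝ) s hs, map_one]

lemma invSqrt_one : invSqrt (1 : A) = 1 := by
  rw [invSqrt, ← map_one (algebraMap ℝ A), cfc_algebraMap, Real.sqrt_one, inv_one]

lemma map_invSqrt {B : Type*} [CStarAlgebra B] (q : A →⋆ₐ[ℂ] B) {s : A} (hs : IsSelfAdjoint s)
    (hpos : ∀ t ∈ spectrum ℝ s, 0 < t) : q (invSqrt s) = invSqrt (q s) :=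
  q.map_cfc _ s (continuousOn_inv_sqrt hpos) (map_continuous q) hs (hs.map q)

end InvSqrt

section PartialIsometry

variable {A : Type*} [CStarAlgebra A]

lemma spectrum_one_add_pos {d : A} (hd : ‖d‖ < 1) {t : ℝ} (ht : t ∈ spectrum ℝ (1 + d)) :
    0 < t := by
  rcases subsingleton_or_nontrivial A with _ | _
  · simp [spectrum.of_subsingleton] at ht
  rw [← map_one (algebraMap ℝ A), ← spectrum.singleton_add_eq] at ht
  obtain ⟨_, rfl, t', ht', rfl⟩ := ht
  have := (Real.norm_eq_abs t' ▸ spectrum.norm_le_norm_of_mem ht').trans_lt hd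
  linarith [neg_abs_le t']

noncomputable def cornerCorrection (a p : A) : A := 1 + (1 - p) * (star a * a - 1) * (1 - p)

lemma isSelfAdjoint_cornerCorrection (a : A) {p : A} (hp : IsSelfAdjoint p) :
    IsSelfAdjoint (cornerCorrection a p) := by
  have hg : IsSelfAdjoint (1 - p) := .sub (.one _) hp
  exact .add (.one _) <| (IsSelfAdjoint.sub (.star_mul_self a) (.one _)).conjugate_self hg

lemma cornerCorrection_mul_self {a p : A} (hp : IsIdempotentElem p) :
    cornerCorrection a p * p = p := by
  have hgp : (1 - p) * p = 0 := by rw [sub_mul, one_mul, hp.eq, sub_self]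
  rw [cornerCorrection, add_mul, one_mul, mul_assoc, hgp, mul_zero, add_zero]

lemma one_sub_mul_star_mul_self_mul_one_sub {a p : A} (hp : IsIdempotentElem p) :
    (1 - p) * (star a * a) * (1 - p) = cornerCorrection a p - p := by
  have hg : (1 - p) * (1 - p) = 1 - p := hp.one_sub.eq
  calc (1 - p) * (star a * a) * (1 - p)
      = (1 - p) * (1 - p) + (1 - p) * (star a * a - 1) * (1 - p) := by noncomm_ring
    _ = cornerCorrection a p - p := by rw [hg, cornerCorrection]; abel

noncomputable def cornerLift (a p : A) : A := a * (1 - p) * invSqrt (cornerCorrection a p)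

lemma cornerLift_mul_star_mul_self {a p : A} (hp : IsStarProjection p)
    (hsmall : ‖(1 - p) * (star a * a - 1) * (1 - p)‖ < 1) :
    cornerLift a p * star (cornerLift a p) * cornerLift a p = cornerLift a p := by
  have hs := isSelfAdjoint_cornerCorrection a hp.isSelfAdjoint
  have hg := hp.one_sub
  rw [cornerLift]
  set s := cornerCorrection a p
  set r := invSqrt s
  have hr : star r = r := (isSelfAdjoint_invSqrt s).star_eq
  have hrrs : r * r * s = 1 :=
    invSqrt_mul_invSqrt_mul_self hs fun _ => spectrum_one_add_pos hsmall
  have hrrp : r * r * p = p :=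
    calc r * r * p = r * r * (s * p) := by rw [cornerCorrection_mul_self hp.isIdempotentElem]
      _ = p := by rw [← mul_assoc, hrrs, one_mul]
  calc a * (1 - p) * r * star (a * (1 - p) * r) * (a * (1 - p) * r)
      = a * (1 - p) * (r * r * ((1 - p) * (star a * a) * (1 - p)) * r) := by
        simp only [star_mul, hr, hg.isSelfAdjoint.star_eq, mul_assoc]
    _ = a * (1 - p) * ((1 - p) * r) := by
        rw [one_sub_mul_star_mul_self_mul_one_sub hp.isIdempotentElem, mul_sub (r * r), hrrs, hrrp]
    _ = a * (1 - p) * r := by rw [← mul_assoc, mul_assoc a, hg.isIdempotentElem.eq]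

lemma map_cornerLift {B : Type*} [CStarAlgebra B] (q : A →⋆ₐ[ℂ] B) {a p : A}
    (hp : IsSelfAdjoint p) (hsmall : ‖(1 - p) * (star a * a - 1) * (1 - p)‖ < 1)
    (hqp : q p = 0) (hqa : q (star a * a) = 1) : q (cornerLift a p) = q a := by
  have hqs : q (cornerCorrection a p) = 1 := by
    simp only [cornerCorrection, map_add, map_mul, map_sub, map_one, hqp, hqa, sub_self, mul_zero,
      zero_mul, add_zero]
  rw [cornerLift, map_mul, map_mul, map_invSqrt q (isSelfAdjoint_cornerCorrection a hp)
    fun _ => spectrum_one_add_pos hsmall, hqs, invSqrt_one, map_sub, map_one, hqp, sub_zero,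
    mul_one, mul_one]

lemma norm_one_sub_mul_mul_one_sub_le {p : A} (hp : IsStarProjection p) (c : A) :
    ‖(1 - p) * c * (1 - p)‖ ≤ ‖(1 - p) * c‖ :=
  calc ‖(1 - p) * c * (1 - p)‖ ≤ ‖(1 - p) * c‖ * ‖1 - p‖ := norm_mul_le _ _
    _ ≤ ‖(1 - p) * c‖ := mul_le_of_le_one_right (norm_nonneg _) (hp.one_sub.norm_le _)

end PartialIsometry

open Filter Topology in
lemma exists_norm_one_sub_mul_lt {I A : Type*} [NonUnitalCStarAlgebra I] [CStarAlgebra A]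
    (ι : I →⋆ₙₐ[ℂ] A) {Λ : Type*} [Nonempty Λ] [Preorder Λ] [IsDirected Λ (· ≤ ·)] {e : Λ → I}
    (happrox : ∀ a : I, Tendsto (fun l => e l * a) atTop (𝓝 a)) (x : I) {ε : ℝ} (hε : 0 < ε) :
    ∃ l, ‖(1 - ι (e l)) * ι x‖ < ε := by
  obtain ⟨l, hl⟩ := ((happrox x).eventually (Metric.ball_mem_nhds x hε)).exists
  refine ⟨l, ?_⟩
  calc ‖(1 - ι (e l)) * ι x‖ = ‖ι (x - e l * x)‖ := by rw [map_sub, map_mul, sub_mul, one_mul]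
    _ ≤ ‖x - e l * x‖ := NonUnitalStarAlgHom.norm_apply_le ι _
    _ < ε := by rwa [norm_sub_rev, ← dist_eq_norm]

theorem stmt13_general {I A B : Type*} [NonUnitalCStarAlgebra I] [CStarAlgebra A] [CStarAlgebra B]
    (ι : I →⋆ₙₐ[ℂ] A)
    (q : A →⋆ₐ[ℂ] B) (hqsurj : Function.Surjective q)
    (hker : ∀ a : A, q a = 0 ↔ a ∈ Set.range ι)
    (Λ : Type*) [Nonempty Λ] [Preorder Λ] [IsDirected Λ (· ≤ ·)]
    (e : Λ → I)
    (hproj : ∀ l, star (e l) = e l ∧ e l * e l = e l)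
    (happrox : ∀ a : I, Filter.Tendsto (fun l => e l * a) Filter.atTop (nhds a)) :
    ∀ u ∈ unitary B, ∃ v : A, v * star v * v = v ∧ q v = u := by
  intro u hu
  obtain ⟨a, rfl⟩ := hqsurj u
  have hqa : q (star a * a) = 1 := by rw [map_mul, map_star]; exact Unitary.star_mul_self_of_mem hu
  have hqc : q (star a * a - 1) = 0 := by rw [map_sub, hqa, map_one, sub_self]
  obtain ⟨x, hx⟩ := (hker _).mp hqc
  obtain ⟨l, hl⟩ := exists_norm_one_sub_mul_lt ι happrox x one_pos
  set p := ι (e l)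
  have hp : IsStarProjection p :=
    ⟨by rw [IsIdempotentElem, ← map_mul, (hproj l).2],
      by rw [IsSelfAdjoint, ← map_star, (hproj l).1]⟩
  have hsmall : ‖(1 - p) * (star a * a - 1) * (1 - p)‖ < 1 :=
    (norm_one_sub_mul_mul_one_sub_le hp _).trans_lt (hx ▸ hl)
  exact ⟨cornerLift a p, cornerLift_mul_star_mul_self hp hsmall,
    map_cornerLift q hp.isSelfAdjoint hsmall ((hker p).mpr ⟨e l, rfl⟩) hqa⟩

/-- Let `I` be a closed two-sided ideal of a unital C*-algebra `A`
(realized by the isometric embedding `ι : I → A`), with `q : A → B` realizing the quotient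
`B = A/I`.  Suppose `I` has an approximate identity consisting of projections, i.e. a net
`(e l)` of projections with `e l * a → a` for all `a ∈ I`.  Then every unitary in `A/I`
lifts to a partial isometry in `A`. -/
theorem stmt13 {I A B : Type*} [NonUnitalCStarAlgebra I] [CStarAlgebra A] [CStarAlgebra B]
    (ι : I →⋆ₙₐ[ℂ] A) (hιisom : Isometry ι)
    (hideal : ∀ (a : A) (x : I), a * ι x ∈ Set.range ι ∧ ι x * a ∈ Set.range ι)
    (q : A →⋆ₐ[ℂ] B) (hqsurj : Function.Surjective q)
    (hker : ∀ a : A, q a = 0 ↔ a ∈ Set.range ι)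
    (Λ : Type*) [Nonempty Λ] [Preorder Λ] [IsDirected Λ (· ≤ ·)]
    (e : Λ → I)
    (hproj : ∀ l, star (e l) = e l ∧ e l * e l = e l)
    (happrox : ∀ a : I, Filter.Tendsto (fun l => e l * a) Filter.atTop (nhds a)) :
    ∀ u ∈ unitary B, ∃ v : A, v * star v * v = v ∧ q v = u :=
  stmt13_general ι q hqsurj hker Λ e hproj happrox
end
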